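/- arXiv:2110.02419 — 4 statements merged into one kernel-verified Lean document; each statement's English description precedes it below -/
import Mathlib

section
/- Let n ≥ 1, let N = {1,...,n}, and let P be a probability density on the subsets of N satisfying NID. Then the matching equation ∑_{i∈N} λ_i[v] = ∑_{T⊆N} P_T · v(T) − v(∅) holds for every payoff function v : 2^N → ℝ if and only if P_T = |T|!·(n−|T|)!/(n+1)! for every subset T ⊆ N. -/
open Finset

lemma aux1 {n : ℕ} (i : Fin n) (P v : Finset (Fin n) → ℝ) :
    ∑ T : Finset (Fin n), P T * (v (insert i T) - v T)
      = ∑ T : Finset (Fin n), (if i ∈ T then P (T.erase i) * v T else -(P T * v T)) := by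
  have key : ∑ T ∈ univ.filter (fun T : Finset (Fin n) => i ∉ T), P T * v (insert i T)
      = ∑ T ∈ univ.filter (fun T : Finset (Fin n) => i ∈ T), P (T.erase i) * v T := by
    apply sum_nbij' (fun T => insert i T) (fun T => T.erase i) <;> simp +contextual
  have split : (∑ T : Finset (Fin n), P T * (v (insert i T) - v T))
      = (∑ T : Finset (Fin n), P T * v (insert i T)) - ∑ T : Finset (Fin n), P T * v T := by
    rw [← sum_sub_distrib]; exact sum_congr rfl fun T _ => by ring
  rw [split,
    ← sum_filter_add_sum_filter_not univ (fun T : Finset (Fin n) => i ∈ T)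
      (fun T => P T * v (insert i T)),
    ← sum_filter_add_sum_filter_not univ (fun T : Finset (Fin n) => i ∈ T)
      (fun T => P T * v T), key, sum_ite]
  have h1 : ∑ T ∈ univ.filter (fun T : Finset (Fin n) => i ∈ T), P T * v (insert i T)
      = ∑ T ∈ univ.filter (fun T : Finset (Fin n) => i ∈ T), P T * v T :=
    sum_congr rfl fun T hT => by rw [insert_eq_self.mpr (mem_filter.mp hT).2]
  rw [h1, sum_neg_distrib]
  ring

lemma master {n : ℕ} (P v : Finset (Fin n) → ℝ) :
    ∑ i : Fin n, ∑ T : Finset (Fin n), P T * (v (insert i T) - v T)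
      = ∑ T : Finset (Fin n),
          ((∑ i ∈ T, P (T.erase i)) - ((n : ℝ) - T.card) * P T) * v T := by
  rw [sum_congr rfl fun i _ => aux1 i P v, sum_comm]
  apply sum_congr rfl; intro T _
  rw [sum_ite]
  have h1 : univ.filter (fun i : Fin n => i ∈ T) = T := filter_univ_mem T
  have h2 : univ.filter (fun i : Fin n => i ∉ T) = Tᶜ := by
    ext i; simp
  rw [h1, h2, sum_const, card_compl, Fintype.card_fin, ← sum_mul]
  rw [nsmul_eq_mul, Nat.cast_sub (by simpa using card_le_card (subset_univ T))]
  ring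

/-- For a probability density `P` on subsets of `N = {1,...,n}` satisfying NID,
the matching equation `∑_{i∈N} λ_i[v] = ∑_{T⊆N} P_T v(T) − v(∅)` holds for every payoff
function `v` if and only if `P_T = |T|!(n−|T|)!/(n+1)!` for every `T ⊆ N`. -/
theorem stmt0 (n : ℕ) (hn : 1 ≤ n) (P : Finset (Fin n) → ℝ)
    (hP0 : ∀ T : Finset (Fin n), 0 ≤ P T)
    (hP1 : ∑ T : Finset (Fin n), P T = 1)
    (hNID : ∀ T Z : Finset (Fin n), T.card = Z.card → P T = P Z) :
    (∀ v : Finset (Fin n) → ℝ,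
        ∑ i : Fin n, ∑ T : Finset (Fin n), P T * (v (insert i T) - v T)
          = (∑ T : Finset (Fin n), P T * v T) - v ∅)
      ↔ (∀ T : Finset (Fin n),
          P T = ((Nat.factorial T.card * Nat.factorial (n - T.card) : ℕ) : ℝ)
                  / ((Nat.factorial (n + 1) : ℕ) : ℝ)) := by
  have hfac : ((Nat.factorial (n + 1) : ℕ) : ℝ) ≠ 0 := by
    exact_mod_cast Nat.factorial_ne_zero (n + 1)
  constructor
  · intro hmatch
    have coef : ∀ S : Finset (Fin n),
        (∑ i ∈ S, P (S.erase i)) - ((n : ℝ) - S.card) * P S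
          = P S - (if ∅ = S then 1 else 0) := by
      intro S
      have h := (master P (fun Z => if Z = S then 1 else 0)).symm.trans
        (hmatch (fun Z => if Z = S then 1 else 0))
      simpa [mul_ite, sum_ite_eq'] using h
    have main : ∀ k : ℕ, ∀ T : Finset (Fin n), T.card = k →
        P T = ((Nat.factorial T.card * Nat.factorial (n - T.card) : ℕ) : ℝ)
                  / ((Nat.factorial (n + 1) : ℕ) : ℝ) := by
      intro k
      induction k with
      | zero =>
        intro T hT
        rw [card_eq_zero] at hT
        subst hT
        have h := coef ∅
        simp at h
        rw [card_empty]
        have : P ∅ * ((n : ℝ) + 1) = 1 := by linarith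
        rw [Nat.factorial_succ]
        field_simp
        push_cast [Nat.factorial_zero, Nat.sub_zero]
        linear_combination (n.factorial : ℝ) * this
      | succ k ih =>
        intro T hT
        obtain ⟨i, hi⟩ := card_pos.mp (by omega : 0 < T.card)
        have hTne : T ≠ ∅ := by
          intro h; subst h; simp at hi
        have hkn : k + 1 ≤ n := by
          rw [← hT]; simpa using card_le_card (subset_univ T)
        obtain ⟨m, hm⟩ : ∃ m, n = m + (k + 1) := ⟨n - (k+1), by omega⟩
        have hcardE : (T.erase i).card = k := by
          simp [card_erase_of_mem hi, hT]
        have hPE : P (T.erase i) = ((Nat.factorial k * Nat.factorial (m + 1) : ℕ) : ℝ)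
            / ((Nat.factorial (n + 1) : ℕ) : ℝ) := by
          rw [ih (T.erase i) hcardE, hcardE, show n - k = m + 1 from by omega]
        have hsum : ∑ j ∈ T, P (T.erase j) = ((k : ℝ) + 1) * P (T.erase i) := by
          rw [sum_congr rfl (fun j hj => hNID (T.erase j) (T.erase i)
            (by rw [card_erase_of_mem hj, card_erase_of_mem hi]))]
          rw [sum_const, hT, nsmul_eq_mul]
          push_cast; ring
        have h := coef T
        rw [if_neg (fun hc => hTne hc.symm), hsum, hPE, hT] at h
        have hns : (n : ℝ) = (m : ℝ) + (k : ℝ) + 1 := by rw [hm]; push_cast; ring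
        rw [hns] at h
        rw [hT, show n - (k+1) = m from by omega]
        have hPT : P T * ((m : ℝ) + 1)
            = ((k : ℝ) + 1) * (((Nat.factorial k * Nat.factorial (m + 1) : ℕ) : ℝ)
                / ((Nat.factorial (n + 1) : ℕ) : ℝ)) := by
          push_cast at h ⊢
          linarith
        have hm1 : ((m : ℝ) + 1) ≠ 0 := by positivity
        have hPT2 : P T = (((k : ℝ) + 1) * (((Nat.factorial k * Nat.factorial (m + 1) : ℕ) : ℝ)
            / ((Nat.factorial (n + 1) : ℕ) : ℝ))) / ((m : ℝ) + 1) := by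
          rw [eq_div_iff hm1]; linarith [hPT]
        rw [hPT2]
        field_simp
        push_cast [Nat.factorial_succ]
        ring
    intro T; exact main T.card T rfl
  · intro hform v
    rw [master]
    have hv : v ∅ = ∑ T : Finset (Fin n), (if T = ∅ then 1 else 0) * v T := by
      simp [ite_mul, sum_ite_eq']
    rw [hv, ← sum_sub_distrib]
    apply sum_congr rfl
    intro T _
    rw [← sub_mul]
    congr 1
    by_cases hT : T = ∅
    · subst hT
      simp only [card_empty, if_pos rfl, sum_empty]
      rw [hform ∅]
      simp only [card_empty, Nat.sub_zero, Nat.factorial_zero, one_mul]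
      rw [Nat.factorial_succ]
      field_simp
      push_cast
      ring
    · rw [if_neg hT]
      obtain ⟨j, hj⟩ : ∃ j, T.card = j + 1 := by
        have := card_pos.mpr (nonempty_iff_ne_empty.mpr hT)
        exact ⟨T.card - 1, by omega⟩
      have hkn : j + 1 ≤ n := by
        rw [← hj]; simpa using card_le_card (subset_univ T)
      obtain ⟨m, hm⟩ : ∃ m, n = m + (j + 1) := ⟨n - (j+1), by omega⟩
      have hE : ∀ i ∈ T, P (T.erase i)
          = ((Nat.factorial j * Nat.factorial (m + 1) : ℕ) : ℝ)
              / ((Nat.factorial (n + 1) : ℕ) : ℝ) := by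
        intro i hi
        rw [hform (T.erase i), card_erase_of_mem hi, hj, Nat.add_sub_cancel,
          show n - j = m + 1 from by omega]
      rw [sum_congr rfl hE, sum_const, nsmul_eq_mul, hform T, hj,
        show n - (j+1) = m from by omega]
      have hns : (n : ℝ) = (m : ℝ) + (j : ℝ) + 1 := by rw [hm]; push_cast; ring
      rw [hns]
      field_simp
      push_cast [Nat.factorial_succ]
      ring
end

section
/- Let n ≥ 1, let N = {1,...,n}, and let P be a probability density on the subsets of N satisfying NID. Then the identity ∑_{Z⊆N} P_Z · Ψ_i[v_Z] = λ_i[v] holds for every player i ∈ N and every payoff function v : 2^N → ℝ if and only if P_T = |T|!·(n−|T|)!/(n+1)! for every subset T ⊆ N. -/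
open Finset

/-- The Shapley value of player `i` in the game `w` on the player set `N = {1,...,n}`:
`Ψ_i[w] = ∑_{T ⊆ N∖{i}} (|T|!(n−|T|−1)!/n!) (w(T∪{i}) − w(T))`. -/
noncomputable def Shapley (n : ℕ) (w : Finset (Fin n) → ℝ) (i : Fin n) : ℝ :=
  ∑ T ∈ ((univ : Finset (Fin n)).erase i).powerset,
    ((Nat.factorial T.card * Nat.factorial (n - T.card - 1) : ℕ) : ℝ)
      / ((Nat.factorial n : ℕ) : ℝ) * (w (insert i T) - w T)

lemma keyNat (a b : ℕ) : ∀ m : ℕ,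
    (∑ k ∈ range (m+1), m.choose k * ((a+k).factorial * (b + (m-k)).factorial))
      * (a+b+1).factorial = a.factorial * b.factorial * (a+b+m+1).factorial := by
  intro m
  induction m with
  | zero => simp [Nat.factorial, mul_comm]
  | succ m ih =>
      have h := Finset.sum_choose_succ_mul (R := ℕ)
        (fun i j => (a+i).factorial * (b+j).factorial) m
      simp only [Nat.cast_id] at h
      rw [show m + 1 + 1 = m + 2 from rfl, h, ← Finset.sum_add_distrib]
      have hterm : ∀ k ∈ range (m+1),
          m.choose k * ((a+k).factorial * (b+(m+1-k)).factorial)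
            + m.choose k * ((a+(k+1)).factorial * (b+(m-k)).factorial)
          = (a+b+m+2) * (m.choose k * ((a+k).factorial * (b+(m-k)).factorial)) := by
        intro k hk
        have hk' : k ≤ m := by simpa [Nat.lt_succ_iff] using hk
        obtain ⟨j, rfl⟩ : ∃ j, m = k + j := ⟨m - k, by omega⟩
        have h1 : k + j + 1 - k = j + 1 := by omega
        have h2 : k + j - k = j := by omega
        rw [h1, h2]
        have e1 : (b + (j+1)).factorial = (b + j + 1) * (b + j).factorial := by
          rw [show b + (j+1) = (b+j) + 1 from rfl, Nat.factorial_succ]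
        have e2 : (a + (k+1)).factorial = (a + k + 1) * (a + k).factorial := by
          rw [show a + (k+1) = (a+k) + 1 from rfl, Nat.factorial_succ]
        rw [e1, e2]; ring
      rw [Finset.sum_congr rfl hterm, ← Finset.mul_sum, mul_assoc, ih]
      have : (a + b + (m+1) + 1).factorial = (a+b+m+2) * (a+b+m+1).factorial := by
        rw [show a + b + (m+1) + 1 = (a+b+m+1)+1 by ring, Nat.factorial_succ]
      rw [this]; ring

lemma keyReal (n s z : ℕ) (h1 : s + 1 ≤ z) (h2 : z ≤ n) :
    ∑ k ∈ range (n - z + 1),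
        ((n-z).choose k : ℝ) *
          ((((s+k).factorial * (n - (s+k) - 1).factorial : ℕ) : ℝ) / (n.factorial : ℝ))
      = ((s.factorial * (z - s - 1).factorial : ℕ) : ℝ) / (z.factorial : ℝ) := by
  have hN := keyNat s (z - s - 1) (n - z)
  have hz : s + (z - s - 1) + 1 = z := by omega
  have hn : s + (z - s - 1) + (n - z) + 1 = n := by omega
  rw [hz, hn] at hN
  have hcong : ∀ k ∈ range (n - z + 1),
      (n-z).choose k * ((s+k).factorial * (n - (s+k) - 1).factorial)
        = (n-z).choose k * ((s+k).factorial * ((z-s-1) + ((n-z)-k)).factorial) := by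
    intro k hk
    have : n - (s+k) - 1 = (z-s-1) + ((n-z)-k) := by
      have := mem_range.mp hk; omega
    rw [this]
  have hsum : (∑ k ∈ range (n - z + 1),
      (n-z).choose k * ((s+k).factorial * (n - (s+k) - 1).factorial)) * z.factorial
      = s.factorial * (z-s-1).factorial * n.factorial := by
    rw [Finset.sum_congr rfl hcong]; exact hN
  have hzf : (z.factorial : ℝ) ≠ 0 := Nat.cast_ne_zero.mpr z.factorial_ne_zero
  have hnf : (n.factorial : ℝ) ≠ 0 := Nat.cast_ne_zero.mpr n.factorial_ne_zero
  have hcast : ((∑ k ∈ range (n - z + 1),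
      (n-z).choose k * ((s+k).factorial * (n - (s+k) - 1).factorial) : ℕ) : ℝ) * z.factorial
      = (s.factorial * (z-s-1).factorial : ℕ) * (n.factorial : ℝ) := by
    exact_mod_cast congrArg (Nat.cast : ℕ → ℝ) hsum
  push_cast at hcast ⊢
  simp only [← mul_div_assoc]
  rw [← Finset.sum_div, div_eq_div_iff hnf hzf]
  linear_combination hcast

lemma sum_powerset_disjUnion {α : Type*} [DecidableEq α] (A B : Finset α) (h : Disjoint A B) (f : Finset α → ℝ) :
    ∑ T ∈ (A ∪ B).powerset, f T = ∑ S ∈ A.powerset, ∑ R ∈ B.powerset, f (S ∪ R) := by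
  rw [← Finset.sum_product']
  refine Finset.sum_nbij' (fun T => (T ∩ A, T ∩ B)) (fun p => p.1 ∪ p.2) ?_ ?_ ?_ ?_ ?_
  · intro T hT
    simp only [mem_powerset] at hT
    simp [mem_product, inter_subset_right]
  · intro p hp
    simp only [mem_product, mem_powerset] at hp
    exact mem_powerset.mpr (union_subset_union hp.1 hp.2)
  · intro T hT
    simp only [mem_powerset] at hT
    dsimp only
    rw [← inter_union_distrib_left, inter_eq_left]
    exact hT
  · rintro ⟨S, R⟩ hp
    simp only [mem_product, mem_powerset] at hp
    have h1 : (S ∪ R) ∩ A = S := by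
      ext x
      simp only [mem_inter, mem_union]
      constructor
      · rintro ⟨hx | hx, hxA⟩
        · exact hx
        · exact absurd hxA (disjoint_left.mp h.symm (hp.2 hx))
      · intro hx; exact ⟨Or.inl hx, hp.1 hx⟩
    have h2 : (S ∪ R) ∩ B = R := by
      ext x
      simp only [mem_inter, mem_union]
      constructor
      · rintro ⟨hx | hx, hxB⟩
        · exact absurd hxB (disjoint_left.mp h (hp.1 hx))
        · exact hx
      · intro hx; exact ⟨Or.inr hx, hp.2 hx⟩
    simp [h1, h2]
  · intro T hT
    simp only [mem_powerset] at hT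
    dsimp only
    rw [← inter_union_distrib_left, inter_eq_left.mpr hT]

lemma sum_filter_superset {α : Type*} [DecidableEq α] [Fintype α] (A : Finset α) (f : Finset α → ℝ) :
    ∑ Z ∈ univ.filter (fun Z => A ⊆ Z), f Z = ∑ R ∈ (univ \ A).powerset, f (A ∪ R) := by
  refine Finset.sum_nbij' (fun Z => Z \ A) (fun R => A ∪ R) ?_ ?_ ?_ ?_ ?_
  · intro Z hZ
    exact mem_powerset.mpr (sdiff_subset_sdiff (subset_univ Z) (Subset.refl A))
  · intro R _
    simp
  · intro Z hZ
    simp only [mem_filter] at hZ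
    exact union_sdiff_of_subset hZ.2
  · intro R hR
    simp only [mem_powerset] at hR
    have : Disjoint A R := disjoint_left.mpr fun x hx hxR => (mem_sdiff.mp (hR hxR)).2 hx
    rw [Finset.union_sdiff_distrib, Finset.sdiff_self, empty_union,
      Finset.sdiff_eq_self_iff_disjoint.mpr this.symm]
  · intro Z hZ
    simp only [mem_filter] at hZ
    rw [union_sdiff_of_subset hZ.2]

noncomputable def wcoef (s z : ℕ) : ℝ :=
  ((s.factorial * (z - s - 1).factorial : ℕ) : ℝ) / ((z.factorial : ℕ) : ℝ)

noncomputable def Phi (n : ℕ) (P : Finset (Fin n) → ℝ) (i : Fin n) (S : Finset (Fin n)) : ℝ :=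
  ∑ Z ∈ univ.filter (fun Z => insert i S ⊆ Z), P Z * wcoef S.card Z.card

lemma core (n : ℕ) (P : Finset (Fin n) → ℝ) (i : Fin n) (v : Finset (Fin n) → ℝ) :
    ∑ Z : Finset (Fin n), P Z * Shapley n (fun T => v (Z ∩ T)) i
      = ∑ S ∈ ((univ : Finset (Fin n)).erase i).powerset,
          Phi n P i S * (v (insert i S) - v S) := by
  classical
  have hZeval : ∀ Z : Finset (Fin n), i ∈ Z →
      P Z * Shapley n (fun T => v (Z ∩ T)) i
        = ∑ S ∈ (Z.erase i).powerset,
            (P Z * wcoef S.card Z.card) * (v (insert i S) - v S) := by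
    intro Z hiZ
    have hdisj : Disjoint (Z.erase i) (((univ : Finset (Fin n)).erase i) \ Z) :=
      disjoint_left.mpr fun x hx hx' => (mem_sdiff.mp hx').2 (mem_of_mem_erase hx)
    have hsplit : ((univ : Finset (Fin n)).erase i)
        = (Z.erase i) ∪ (((univ : Finset (Fin n)).erase i) \ Z) := by
      ext x
      simp only [mem_erase, mem_union, mem_sdiff, mem_univ, and_true]
      tauto
    unfold Shapley
    rw [hsplit, sum_powerset_disjUnion _ _ hdisj, Finset.mul_sum]
    refine sum_congr rfl fun S hS => ?_
    rw [mem_powerset] at hS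
    have hiS : i ∉ S := fun h => (mem_erase.mp (hS h)).1 rfl
    have hSZ : S ⊆ Z := fun x hx => mem_of_mem_erase (hS hx)
    -- inner sum over R
    have hinner : ∀ R ∈ (((univ : Finset (Fin n)).erase i) \ Z).powerset,
        ((Nat.factorial (S ∪ R).card * Nat.factorial (n - (S ∪ R).card - 1) : ℕ) : ℝ)
            / ((Nat.factorial n : ℕ) : ℝ)
            * (v (Z ∩ insert i (S ∪ R)) - v (Z ∩ (S ∪ R)))
          = ((Nat.factorial (S.card + R.card) * Nat.factorial (n - (S.card + R.card) - 1) : ℕ) : ℝ)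
            / ((Nat.factorial n : ℕ) : ℝ) * (v (insert i S) - v S) := by
      intro R hR
      rw [mem_powerset] at hR
      have hRZ : Disjoint R Z := disjoint_left.mpr fun x hx => (mem_sdiff.mp (hR hx)).2
      have hSR : Disjoint S R := disjoint_left.mpr fun x hx hx' =>
        (mem_sdiff.mp (hR hx')).2 (hSZ hx)
      have hcard : (S ∪ R).card = S.card + R.card := card_union_of_disjoint hSR
      have hZSR : Z ∩ (S ∪ R) = S := by
        rw [inter_union_distrib_left, inter_eq_right.mpr hSZ,
          (disjoint_iff_inter_eq_empty.mp hRZ.symm)]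
        exact union_empty S
      have hZiSR : Z ∩ insert i (S ∪ R) = insert i S := by
        rw [inter_comm, insert_inter_of_mem hiZ, inter_comm, hZSR]
      rw [hcard, hZSR, hZiSR]
    rw [Finset.sum_congr rfl hinner]
    -- pull out the constant factor
    rw [← Finset.sum_mul]
    have hcardB : (((univ : Finset (Fin n)).erase i) \ Z).card = n - Z.card := by
      have : ((univ : Finset (Fin n)).erase i) \ Z = univ \ Z := by
        ext x
        simp only [mem_sdiff, mem_erase, mem_univ, and_true]
        have hxi : x ∉ Z → ¬ x = i := fun h he => h (he ▸ hiZ)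
        tauto
      rw [this, card_sdiff_of_subset (subset_univ Z), card_univ, Fintype.card_fin]
    have hs1 : S.card + 1 ≤ Z.card := by
      have h1 : S.card ≤ (Z.erase i).card := card_le_card hS
      have h2 : (Z.erase i).card = Z.card - 1 := card_erase_of_mem hiZ
      have h3 : 1 ≤ Z.card := card_pos.mpr ⟨i, hiZ⟩
      omega
    have hzn : Z.card ≤ n := by
      have := card_le_univ Z
      rwa [Fintype.card_fin] at this
    have hsum : ∑ R ∈ (((univ : Finset (Fin n)).erase i) \ Z).powerset,
        ((Nat.factorial (S.card + R.card) * Nat.factorial (n - (S.card + R.card) - 1) : ℕ) : ℝ)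
          / ((Nat.factorial n : ℕ) : ℝ)
        = wcoef S.card Z.card := by
      rw [Finset.sum_powerset_apply_card
        (fun m => ((Nat.factorial (S.card + m) * Nat.factorial (n - (S.card + m) - 1) : ℕ) : ℝ)
          / ((Nat.factorial n : ℕ) : ℝ)), hcardB]
      simp only [nsmul_eq_mul]
      exact keyReal n S.card Z.card hs1 hzn
    rw [hsum]
    ring
  -- split the outer sum by whether i ∈ Z
  rw [← Finset.sum_filter_add_sum_filter_not univ (fun Z => i ∈ Z)]
  have hzero : ∑ Z ∈ univ.filter (fun Z => ¬ i ∈ Z),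
      P Z * Shapley n (fun T => v (Z ∩ T)) i = 0 := by
    refine Finset.sum_eq_zero fun Z hZ => ?_
    have hiZ : i ∉ Z := (mem_filter.mp hZ).2
    have : Shapley n (fun T => v (Z ∩ T)) i = 0 := by
      unfold Shapley
      refine Finset.sum_eq_zero fun T hT => ?_
      have : Z ∩ insert i T = Z ∩ T := by
        rw [inter_comm, insert_inter_of_notMem hiZ, inter_comm]
      dsimp only
      rw [this]
      simp
    rw [this, mul_zero]
  rw [hzero, add_zero]
  rw [Finset.sum_congr rfl fun Z hZ => hZeval Z (mem_filter.mp hZ).2]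
  rw [Finset.sum_comm' (t' := ((univ : Finset (Fin n)).erase i).powerset)
    (s' := fun S => univ.filter (fun Z => insert i S ⊆ Z)) ?_]
  · refine sum_congr rfl fun S hS => ?_
    rw [Phi, Finset.sum_mul]
  · intro Z S
    simp only [mem_filter, mem_univ, true_and, mem_powerset, subset_erase,
      insert_subset_iff, subset_univ, and_true]
    constructor
    · rintro ⟨hiZ, hSZ, hiS⟩
      exact ⟨⟨hiZ, hSZ⟩, hiS⟩
    · rintro ⟨⟨hiZ, hSZ⟩, hiS⟩
      exact ⟨hiZ, hSZ, hiS⟩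

noncomputable def gfun (n t : ℕ) : ℝ :=
  ((Nat.factorial t * Nat.factorial (n - t) : ℕ) : ℝ) / ((Nat.factorial (n + 1) : ℕ) : ℝ)

def canon (n t : ℕ) : Finset (Fin n) := univ.filter (fun j : Fin n => (j : ℕ) < t)

lemma canon_card (n t : ℕ) (h : t ≤ n) : (canon n t).card = t := by
  have : canon n t = (range t).attachFin
      (fun m hm => lt_of_lt_of_le (mem_range.mp hm) h) := by
    ext j
    simp [canon, Finset.mem_attachFin]
  rw [this, Finset.card_attachFin, card_range]

lemma qsum_g (n s : ℕ) (hs : s < n) :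
    ∑ k ∈ range (n - s), ((n - s - 1).choose k : ℝ)
        * (gfun n (s+1+k) * wcoef s (s+1+k)) = gfun n s := by
  have hterm : ∀ k ∈ range (n - s),
      ((n - s - 1).choose k : ℝ) * (gfun n (s+1+k) * wcoef s (s+1+k))
        = ((s.factorial * (n - s - 1).factorial : ℕ) : ℝ)
            / (((n+1).factorial : ℕ) : ℝ) := by
    intro k hk
    have hk' : k ≤ n - s - 1 := by have := mem_range.mp hk; omega
    have hz1 : s + 1 + k - s - 1 = k := by omega
    have hz2 : n - (s+1+k) = n - s - 1 - k := by omega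
    have hC := Nat.choose_mul_factorial_mul_factorial hk'
    have hCcast : (((n-s-1).choose k : ℕ) : ℝ) * (k.factorial : ℝ)
        * ((n-s-1-k).factorial : ℝ) = ((n-s-1).factorial : ℝ) := by
      exact_mod_cast congrArg (Nat.cast : ℕ → ℝ) hC
    unfold gfun wcoef
    rw [hz1, hz2]
    push_cast
    have h1 : ((s+1+k).factorial : ℝ) ≠ 0 := Nat.cast_ne_zero.mpr (Nat.factorial_ne_zero _)
    have h2 : (((n+1)).factorial : ℝ) ≠ 0 := Nat.cast_ne_zero.mpr (Nat.factorial_ne_zero _)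
    field_simp
    linear_combination hCcast
  rw [Finset.sum_congr rfl hterm, Finset.sum_const, card_range, nsmul_eq_mul]
  unfold gfun
  have h3 : n - s = (n - s - 1) + 1 := by omega
  have h4 : (n - s).factorial = (n - s) * (n - s - 1).factorial := by
    rw [h3, Nat.factorial_succ, ← h3]
  push_cast [h4]
  ring

lemma gsum_one (n : ℕ) : ∑ T : Finset (Fin n), gfun n T.card = 1 := by
  rw [← Finset.powerset_univ, Finset.sum_powerset_apply_card (gfun n)]
  have hcard : #(univ : Finset (Fin n)) = n := by simp
  rw [hcard]
  have hterm : ∀ m ∈ range (n+1), n.choose m • gfun n m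
      = ((n.factorial : ℕ) : ℝ) / (((n+1).factorial : ℕ) : ℝ) := by
    intro m hm
    have hm' : m ≤ n := by have := mem_range.mp hm; omega
    have hC := Nat.choose_mul_factorial_mul_factorial hm'
    rw [nsmul_eq_mul]
    unfold gfun
    have hne : (((n+1).factorial : ℕ) : ℝ) ≠ 0 := Nat.cast_ne_zero.mpr (Nat.factorial_ne_zero _)
    have hCc : ((n.choose m : ℕ) : ℝ) * (m.factorial : ℝ) * ((n-m).factorial : ℝ)
        = (n.factorial : ℝ) := by exact_mod_cast congrArg (Nat.cast : ℕ → ℝ) hC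
    push_cast
    field_simp
    linear_combination hCc
  rw [Finset.sum_congr rfl hterm, Finset.sum_const, card_range, nsmul_eq_mul]
  rw [Nat.factorial_succ]
  push_cast
  have : (n.factorial : ℝ) ≠ 0 := Nat.cast_ne_zero.mpr (Nat.factorial_ne_zero _)
  field_simp

lemma rhs_red (n : ℕ) (P : Finset (Fin n) → ℝ) (i : Fin n) (v : Finset (Fin n) → ℝ) :
    ∑ T : Finset (Fin n), P T * (v (insert i T) - v T)
      = ∑ S ∈ ((univ : Finset (Fin n)).erase i).powerset, P S * (v (insert i S) - v S) := by
  rw [← Finset.sum_filter_add_sum_filter_not univ (fun T => i ∈ T)]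
  have h1 : ∑ T ∈ univ.filter (fun T => i ∈ T), P T * (v (insert i T) - v T) = 0 := by
    refine Finset.sum_eq_zero fun T hT => ?_
    rw [insert_eq_self.mpr (mem_filter.mp hT).2]
    simp
  have h2 : univ.filter (fun T : Finset (Fin n) => ¬ i ∈ T)
      = ((univ : Finset (Fin n)).erase i).powerset := by
    ext T
    simp [mem_powerset, subset_erase, subset_univ]
  rw [h1, zero_add, h2]

lemma phi_eval (n : ℕ) (P : Finset (Fin n) → ℝ)
    (hNID : ∀ T Z : Finset (Fin n), T.card = Z.card → P T = P Z)
    (i : Fin n) (S : Finset (Fin n)) (hS : S ∈ ((univ : Finset (Fin n)).erase i).powerset) :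
    Phi n P i S = ∑ k ∈ range (n - S.card), ((n - S.card - 1).choose k : ℝ)
        * (P (canon n (S.card + 1 + k)) * wcoef S.card (S.card + 1 + k)) := by
  rw [mem_powerset, subset_erase] at hS
  obtain ⟨-, hiS⟩ := hS
  have hcardiS : (insert i S).card = S.card + 1 := card_insert_of_notMem hiS
  have hSn : S.card + 1 ≤ n := by
    have := card_le_univ (insert i S)
    rwa [hcardiS, Fintype.card_fin] at this
  unfold Phi
  rw [sum_filter_superset]
  have hterm : ∀ R ∈ ((univ : Finset (Fin n)) \ insert i S).powerset,
      P (insert i S ∪ R) * wcoef S.card (insert i S ∪ R).card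
        = P (canon n (S.card + 1 + R.card)) * wcoef S.card (S.card + 1 + R.card) := by
    intro R hR
    rw [mem_powerset] at hR
    have hdisj : Disjoint (insert i S) R :=
      disjoint_left.mpr fun x hx hxR => (mem_sdiff.mp (hR hxR)).2 hx
    have hcard : (insert i S ∪ R).card = S.card + 1 + R.card := by
      rw [card_union_of_disjoint hdisj, hcardiS]
    have hle : S.card + 1 + R.card ≤ n := by
      have := card_le_univ (insert i S ∪ R)
      rwa [hcard, Fintype.card_fin] at this
    rw [hNID (insert i S ∪ R) (canon n (S.card + 1 + R.card))
      (by rw [hcard, canon_card n _ hle]), hcard]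
  rw [Finset.sum_congr rfl hterm]
  rw [Finset.sum_powerset_apply_card
    (fun m => P (canon n (S.card + 1 + m)) * wcoef S.card (S.card + 1 + m))]
  have hBcard : #((univ : Finset (Fin n)) \ insert i S) = n - (S.card + 1) := by
    rw [card_sdiff_of_subset (subset_univ _), card_univ, Fintype.card_fin, hcardiS]
  rw [hBcard]
  have h1 : n - (S.card + 1) + 1 = n - S.card := by omega
  have h2 : n - (S.card + 1) = n - S.card - 1 := by omega
  rw [h1, h2]
  refine Finset.sum_congr rfl fun k hk => ?_
  rw [nsmul_eq_mul]


/-- For a probability density `P` on subsets of `N = {1,...,n}` satisfying NID,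
the identity `∑_{Z⊆N} P_Z Ψ_i[v_Z] = λ_i[v]` holds for every player `i` and every payoff
function `v` if and only if `P_T = |T|!(n−|T|)!/(n+1)!` for every `T ⊆ N`, where
`v_Z(T) = v(Z ∩ T)` is the restricted game. -/
theorem stmt2 (n : ℕ) (hn : 1 ≤ n) (P : Finset (Fin n) → ℝ)
    (hP0 : ∀ T : Finset (Fin n), 0 ≤ P T)
    (hP1 : ∑ T : Finset (Fin n), P T = 1)
    (hNID : ∀ T Z : Finset (Fin n), T.card = Z.card → P T = P Z) :
    (∀ (i : Fin n) (v : Finset (Fin n) → ℝ),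
        ∑ Z : Finset (Fin n), P Z * Shapley n (fun T => v (Z ∩ T)) i
          = ∑ T : Finset (Fin n), P T * (v (insert i T) - v T))
      ↔ (∀ T : Finset (Fin n),
          P T = ((Nat.factorial T.card * Nat.factorial (n - T.card) : ℕ) : ℝ)
                  / ((Nat.factorial (n + 1) : ℕ) : ℝ)) := by
  classical
  have hgn0 : gfun n n ≠ 0 := by
    unfold gfun
    apply div_ne_zero
    · exact Nat.cast_ne_zero.mpr
        (Nat.mul_ne_zero (Nat.factorial_ne_zero _) (Nat.factorial_ne_zero _))
    · exact Nat.cast_ne_zero.mpr (Nat.factorial_ne_zero _)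
  have hiff1 : (∀ (i : Fin n) (v : Finset (Fin n) → ℝ),
        ∑ Z : Finset (Fin n), P Z * Shapley n (fun T => v (Z ∩ T)) i
          = ∑ T : Finset (Fin n), P T * (v (insert i T) - v T)) ↔
      (∀ (i : Fin n) (S : Finset (Fin n)), S ∈ ((univ : Finset (Fin n)).erase i).powerset →
        Phi n P i S = P S) := by
    constructor
    · intro hId i S hS
      set vS : Finset (Fin n) → ℝ := (fun X => if X = S then (1:ℝ) else 0) with hvS
      have h1 := hId i vS
      rw [core, rhs_red] at h1
      have hiS : i ∉ S := by
        rw [mem_powerset, subset_erase] at hS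
        exact hS.2
      have heval : ∀ (W : Finset (Fin n) → ℝ),
          ∑ S' ∈ ((univ : Finset (Fin n)).erase i).powerset,
            W S' * (vS (insert i S') - vS S')
            = - W S := by
        intro W
        have hterm : ∀ S' ∈ ((univ : Finset (Fin n)).erase i).powerset,
            W S' * (vS (insert i S') - vS S')
              = -(if S' = S then W S' else 0) := by
          intro S' hS'
          have hne : insert i S' ≠ S := fun h => hiS (h ▸ mem_insert_self i S')
          rw [hvS]
          simp only
          rw [if_neg hne]
          split_ifs <;> ring
        rw [Finset.sum_congr rfl hterm, Finset.sum_neg_distrib,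
          Finset.sum_ite_eq' _ S W, if_pos hS]
      rw [heval (Phi n P i), heval P] at h1
      exact neg_inj.mp h1
    · intro hPhi i v
      rw [core, rhs_red]
      exact Finset.sum_congr rfl fun S hS => by rw [hPhi i S hS]
  rw [hiff1]
  constructor
  · intro key T
    have hq : ∀ s, s < n →
        (∑ k ∈ range (n - s), ((n - s - 1).choose k : ℝ)
            * (P (canon n (s+1+k)) * wcoef s (s+1+k)))
          = P (canon n s) := by
      intro s hs
      have hnpos : 0 < n := by omega
      set i : Fin n := ⟨n-1, by omega⟩ with hidef
      have hiS : i ∉ canon n s := by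
        simp only [canon, mem_filter, mem_univ, true_and, hidef]
        intro hlt
        omega
      have hmem : canon n s ∈ ((univ : Finset (Fin n)).erase i).powerset :=
        mem_powerset.mpr (subset_erase.mpr ⟨subset_univ _, hiS⟩)
      have h2 := key i (canon n s) hmem
      rw [phi_eval n P hNID i _ hmem, canon_card n s (le_of_lt hs)] at h2
      exact h2
    have hdown : ∀ d s, s ≤ n → n - s ≤ d →
        P (canon n s) = (P (canon n n) / gfun n n) * gfun n s := by
      intro d
      induction d with
      | zero =>
          intro s h1 h2
          have hsn : s = n := by omega
          subst hsn
          rw [div_mul_cancel₀ _ hgn0]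
      | succ d ih =>
          intro s h1 h2
          by_cases hsn : s = n
          · subst hsn
            rw [div_mul_cancel₀ _ hgn0]
          · have hs : s < n := lt_of_le_of_ne h1 hsn
            rw [← hq s hs]
            have hterm : ∀ k ∈ range (n - s),
                ((n - s - 1).choose k : ℝ) * (P (canon n (s+1+k)) * wcoef s (s+1+k))
                  = (P (canon n n) / gfun n n)
                    * (((n - s - 1).choose k : ℝ) * (gfun n (s+1+k) * wcoef s (s+1+k))) := by
              intro k hk
              have hk' : k < n - s := mem_range.mp hk
              rw [ih (s+1+k) (by omega) (by omega)]
              ring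
            rw [Finset.sum_congr rfl hterm, ← Finset.mul_sum, qsum_g n s hs]
    have hone : P (canon n n) / gfun n n = 1 := by
      have hPT : ∀ T : Finset (Fin n), P T = (P (canon n n) / gfun n n) * gfun n T.card := by
        intro T
        have hTn : T.card ≤ n := by
          have := card_le_univ T
          rwa [Fintype.card_fin] at this
        rw [hNID T (canon n T.card) (by rw [canon_card n _ hTn])]
        exact hdown n T.card hTn (by omega)
      rw [Finset.sum_congr rfl (fun T _ => hPT T), ← Finset.mul_sum, gsum_one, mul_one] at hP1
      exact hP1
    have hTn : T.card ≤ n := by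
      have := card_le_univ T
      rwa [Fintype.card_fin] at this
    have hfin := hdown n T.card hTn (by omega)
    rw [hone, one_mul] at hfin
    rw [hNID T (canon n T.card) (by rw [canon_card n _ hTn]), hfin]
    rfl
  · intro hP i S hS
    have hSn : S.card < n := by
      have h1 : S.card ≤ ((univ : Finset (Fin n)).erase i).card :=
        card_le_card (mem_powerset.mp hS)
      have h2 : ((univ : Finset (Fin n)).erase i).card = n - 1 := by
        rw [card_erase_of_mem (mem_univ i), card_univ, Fintype.card_fin]
      have h3 : (i : ℕ) < n := i.isLt
      omega
    rw [phi_eval n P hNID i S hS]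
    have hterm : ∀ k ∈ range (n - S.card),
        ((n - S.card - 1).choose k : ℝ)
            * (P (canon n (S.card + 1 + k)) * wcoef S.card (S.card + 1 + k))
          = ((n - S.card - 1).choose k : ℝ)
            * (gfun n (S.card + 1 + k) * wcoef S.card (S.card + 1 + k)) := by
      intro k hk
      have hk' : k < n - S.card := mem_range.mp hk
      have hle : S.card + 1 + k ≤ n := by omega
      rw [hP (canon n (S.card + 1 + k))]
      rw [canon_card n _ hle]
      rfl
    rw [Finset.sum_congr rfl hterm, qsum_g n S.card hSn, hP S]
    rfl
end

section
/- Let n ≥ 1, let N = {1,...,n}, let v : 2^N → ℝ be a payoff function, let Z ⊆ N be nonempty, and let i ∈ Z. Then the Shapley value of i in the restricted game v_Z satisfies Ψ_i[v_Z] = ∑_{T ⊆ Z∖{i}} (|T|!·(|Z|−|T|−1)!/|Z|!) · (v(T∪{i}) − v(T)); that is, it equals the Shapley value of i in the game v restricted to the player set Z. -/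
open Finset

lemma key (s d : ℕ) : ∀ m : ℕ,
    ∑ k ∈ Finset.range (m+1),
      ((m.choose k * Nat.factorial (s+k) * Nat.factorial (d + (m-k)) : ℕ) : ℝ)
        / ((Nat.factorial (s+d+1+m) : ℕ) : ℝ)
    = ((Nat.factorial s * Nat.factorial d : ℕ) : ℝ) / ((Nat.factorial (s+d+1) : ℕ) : ℝ) := by
  intro m
  induction m with
  | zero => simp
  | succ m ih =>
    rw [Finset.sum_range_succ']
    have h1 : ∀ k ∈ Finset.range (m+1),
        (((m+1).choose (k+1) * Nat.factorial (s+(k+1)) * Nat.factorial (d + (m+1-(k+1))) : ℕ) : ℝ)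
          / ((Nat.factorial (s+d+1+(m+1)) : ℕ) : ℝ)
        = ((m.choose k * Nat.factorial (s+k+1) * Nat.factorial (d + (m-k)) : ℕ) : ℝ)
            / ((Nat.factorial (s+d+1+(m+1)) : ℕ) : ℝ)
          + ((m.choose (k+1) * Nat.factorial (s+(k+1)) * Nat.factorial (d + (m+1-(k+1))) : ℕ) : ℝ)
            / ((Nat.factorial (s+d+1+(m+1)) : ℕ) : ℝ) := by
      intro k hk
      rw [Nat.choose_succ_succ, Nat.succ_sub_succ, Nat.succ_eq_add_one]
      push_cast
      ring
    rw [Finset.sum_congr rfl h1, Finset.sum_add_distrib]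
    have hb : (∑ k ∈ Finset.range (m+1),
          ((m.choose (k+1) * Nat.factorial (s+(k+1)) * Nat.factorial (d + (m+1-(k+1))) : ℕ) : ℝ)
            / ((Nat.factorial (s+d+1+(m+1)) : ℕ) : ℝ))
        + ((m.choose 0 * Nat.factorial (s+0) * Nat.factorial (d + (m+1-0)) : ℕ) : ℝ)
            / ((Nat.factorial (s+d+1+(m+1)) : ℕ) : ℝ)
        = ∑ k ∈ Finset.range (m+1),
            ((m.choose k * Nat.factorial (s+k) * Nat.factorial (d + (m+1-k)) : ℕ) : ℝ)
              / ((Nat.factorial (s+d+1+(m+1)) : ℕ) : ℝ) := by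
      rw [← Finset.sum_range_succ'
        (fun k => ((m.choose k * Nat.factorial (s+k) * Nat.factorial (d + (m+1-k)) : ℕ) : ℝ)
              / ((Nat.factorial (s+d+1+(m+1)) : ℕ) : ℝ)) (m+1),
        Finset.sum_range_succ]
      simp [Nat.choose_succ_self]
    have hc0 : (((m+1).choose 0 * Nat.factorial (s+0) * Nat.factorial (d + (m+1-0)) : ℕ) : ℝ)
        = ((m.choose 0 * Nat.factorial (s+0) * Nat.factorial (d + (m+1-0)) : ℕ) : ℝ) := by
      norm_num
    rw [add_assoc, hc0, hb, ← Finset.sum_add_distrib]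
    rw [← ih]
    apply Finset.sum_congr rfl
    intro k hk
    rw [Finset.mem_range] at hk
    obtain ⟨j, hj⟩ : ∃ j, m = k + j := ⟨m - k, by omega⟩
    subst hj
    have e1 : k + j - k = j := by omega
    have e2 : k + j + 1 - k = j + 1 := by omega
    rw [e1, e2]
    have F1 : ((Nat.factorial (s+d+1+(k+j)) : ℕ) : ℝ) ≠ 0 :=
      Nat.cast_ne_zero.mpr (Nat.factorial_ne_zero _)
    have F2 : ((Nat.factorial (s+d+1+(k+j+1)) : ℕ) : ℝ) ≠ 0 :=
      Nat.cast_ne_zero.mpr (Nat.factorial_ne_zero _)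
    have e3 : s + k + 1 = (s + k) + 1 := rfl
    have e4 : d + (j+1) = (d + j) + 1 := by omega
    have e5 : s+d+1+(k+j+1) = (s+d+1+(k+j)) + 1 := by omega
    rw [e4, e5, Nat.factorial_succ (s+k), Nat.factorial_succ (d+j), Nat.factorial_succ (s+d+1+(k+j))]
    push_cast
    field_simp
    ring

/-- For a nonempty `Z ⊆ N` and `i ∈ Z`, the Shapley value of `i` in the
restricted game `v_Z(T) = v(Z ∩ T)` equals
`∑_{T ⊆ Z∖{i}} (|T|!(|Z|−|T|−1)!/|Z|!)(v(T∪{i}) − v(T))`, i.e. the Shapley value of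
`i` in the game `v` restricted to the player set `Z`. -/
theorem stmt4 (n : ℕ) (hn : 1 ≤ n) (v : Finset (Fin n) → ℝ)
    (Z : Finset (Fin n)) (hZ : Z.Nonempty) (i : Fin n) (hi : i ∈ Z) :
    Shapley n (fun T => v (Z ∩ T)) i
      = ∑ T ∈ (Z.erase i).powerset,
          ((Nat.factorial T.card * Nat.factorial (Z.card - T.card - 1) : ℕ) : ℝ)
            / ((Nat.factorial Z.card : ℕ) : ℝ) * (v (insert i T) - v T) := by
  unfold Shapley
  have hmap : ∀ T ∈ ((univ : Finset (Fin n)).erase i).powerset, Z ∩ T ∈ (Z.erase i).powerset := by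
    intro T hT
    rw [Finset.mem_powerset] at hT ⊢
    intro x hx
    rw [Finset.mem_inter] at hx
    rw [Finset.mem_erase]
    refine ⟨?_, hx.1⟩
    intro hxe
    subst hxe
    exact (Finset.mem_erase.mp (hT hx.2)).1 rfl
  rw [← Finset.sum_fiberwise_of_maps_to hmap]
  apply Finset.sum_congr rfl
  intro S hS
  rw [Finset.mem_powerset] at hS
  have hiS : i ∉ S := fun h => (Finset.mem_erase.mp (hS h)).1 rfl
  have hSZ : S ⊆ Z := hS.trans (Finset.erase_subset _ _)
  -- each term in the fiber has the same v-difference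
  have hterm : ∀ T ∈ (((univ : Finset (Fin n)).erase i).powerset).filter (fun T => Z ∩ T = S),
      ((Nat.factorial T.card * Nat.factorial (n - T.card - 1) : ℕ) : ℝ)
        / ((Nat.factorial n : ℕ) : ℝ) * (v (Z ∩ insert i T) - v (Z ∩ T))
      = ((Nat.factorial T.card * Nat.factorial (n - T.card - 1) : ℕ) : ℝ)
        / ((Nat.factorial n : ℕ) : ℝ) * (v (insert i S) - v S) := by
    intro T hT
    rw [Finset.mem_filter, Finset.mem_powerset] at hT
    obtain ⟨hT1, hT2⟩ := hT
    rw [Finset.inter_insert_of_mem hi, hT2]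
  rw [Finset.sum_congr rfl hterm, ← Finset.sum_mul]
  congr 1
  -- now the coefficient identity
  have hz1 : 1 ≤ Z.card := Finset.card_pos.mpr hZ
  have hsz : S.card + 1 ≤ Z.card := by
    have := Finset.card_le_card hS
    rw [Finset.card_erase_of_mem hi] at this
    omega
  have hzn : Z.card ≤ n := by
    have := Finset.card_le_card (Finset.subset_univ Z)
    simpa using this
  have hm : ((univ : Finset (Fin n)) \ Z).card = n - Z.card := by
    rw [Finset.card_sdiff_of_subset (Finset.subset_univ Z)]
    simp
  -- biject fiber with powerset of univ \ Z
  have hbij : ∑ T ∈ (((univ : Finset (Fin n)).erase i).powerset).filter (fun T => Z ∩ T = S),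
      ((Nat.factorial T.card * Nat.factorial (n - T.card - 1) : ℕ) : ℝ)
        / ((Nat.factorial n : ℕ) : ℝ)
      = ∑ U ∈ ((univ : Finset (Fin n)) \ Z).powerset,
      ((Nat.factorial (S.card + U.card) * Nat.factorial (n - (S.card + U.card) - 1) : ℕ) : ℝ)
        / ((Nat.factorial n : ℕ) : ℝ) := by
    apply Finset.sum_nbij' (fun T => T \ Z) (fun U => S ∪ U)
    · intro T hT
      rw [Finset.mem_filter, Finset.mem_powerset] at hT
      rw [Finset.mem_powerset]
      exact Finset.sdiff_subset_sdiff (Finset.subset_univ T) le_rfl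
    · intro U hU
      rw [Finset.mem_powerset] at hU
      rw [Finset.mem_filter, Finset.mem_powerset]
      constructor
      · intro x hx
        rw [Finset.mem_union] at hx
        rw [Finset.mem_erase]
        rcases hx with hx | hx
        · exact ⟨fun h => hiS (h ▸ hx), Finset.mem_univ x⟩
        · refine ⟨fun h => ?_, Finset.mem_univ x⟩
          subst h
          exact (Finset.mem_sdiff.mp (hU hx)).2 hi
      · rw [Finset.inter_union_distrib_left]
        have h1 : Z ∩ S = S := Finset.inter_eq_right.mpr hSZ
        have h2 : Z ∩ U = ∅ := by
          rw [Finset.eq_empty_iff_forall_notMem]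
          intro x hx
          rw [Finset.mem_inter] at hx
          exact (Finset.mem_sdiff.mp (hU hx.2)).2 hx.1
        rw [h1, h2, Finset.union_empty]
    · intro T hT
      rw [Finset.mem_filter, Finset.mem_powerset] at hT
      rw [← hT.2]
      ext x
      simp only [Finset.mem_union, Finset.mem_inter, Finset.mem_sdiff]
      tauto
    · intro U hU
      rw [Finset.mem_powerset] at hU
      ext x
      simp only [Finset.mem_sdiff, Finset.mem_union]
      constructor
      · rintro ⟨hx | hx, hz⟩
        · exact absurd (hSZ hx) hz
        · exact hx
      · intro hx
        exact ⟨Or.inr hx, (Finset.mem_sdiff.mp (hU hx)).2⟩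
    · intro T hT
      rw [Finset.mem_filter, Finset.mem_powerset] at hT
      have hcard : T.card = S.card + (T \ Z).card := by
        rw [← hT.2, Finset.inter_comm Z T]
        exact (Finset.card_inter_add_card_sdiff T Z).symm
      rw [hcard]
  rw [hbij, Finset.sum_powerset, hm]
  have h3 : ∀ k ∈ Finset.range (n - Z.card + 1),
      (∑ U ∈ Finset.powersetCard k ((univ : Finset (Fin n)) \ Z),
        ((Nat.factorial (S.card + U.card) * Nat.factorial (n - (S.card + U.card) - 1) : ℕ) : ℝ)
          / ((Nat.factorial n : ℕ) : ℝ))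
      = (((n - Z.card).choose k * Nat.factorial (S.card + k)
            * Nat.factorial ((Z.card - S.card - 1) + ((n - Z.card) - k)) : ℕ) : ℝ)
          / ((Nat.factorial (S.card + (Z.card - S.card - 1) + 1 + (n - Z.card)) : ℕ) : ℝ) := by
    intro k hk
    rw [Finset.mem_range] at hk
    have e1 : n - (S.card + k) - 1 = (Z.card - S.card - 1) + ((n - Z.card) - k) := by omega
    have e2 : S.card + (Z.card - S.card - 1) + 1 + (n - Z.card) = n := by omega
    have hconst : ∀ U ∈ Finset.powersetCard k ((univ : Finset (Fin n)) \ Z),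
        ((Nat.factorial (S.card + U.card) * Nat.factorial (n - (S.card + U.card) - 1) : ℕ) : ℝ)
          / ((Nat.factorial n : ℕ) : ℝ)
        = ((Nat.factorial (S.card + k) * Nat.factorial ((Z.card - S.card - 1) + ((n - Z.card) - k)) : ℕ) : ℝ)
          / ((Nat.factorial n : ℕ) : ℝ) := by
      intro U hU
      rw [(Finset.mem_powersetCard.mp hU).2, e1]
    rw [Finset.sum_congr rfl hconst, Finset.sum_const, Finset.card_powersetCard, hm, e2]
    push_cast
    ring
  rw [Finset.sum_congr rfl h3, key]
  have e3 : S.card + (Z.card - S.card - 1) + 1 = Z.card := by omega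
  rw [e3]
end

section
/- Let n ≥ 1, let N = {1,...,n}, and let P be a probability density on the subsets of N satisfying NID, so that P_T = |T|!·(n−|T|)!·δ_{|T|}/n! where δ_t = ∑_{|T|=t} P_T. Then for every payoff function v : 2^N → ℝ, the sum of the loss functions satisfies ∑_{i∈N} λ_i[v] = −n·δ_0·v(∅) + ∑_{T⊆N, T≠∅} (|T|!·(n−|T|)!/n!) · [(n−|T|+1)·δ_{|T|−1} − (n−|T|)·δ_{|T|}] · v(T). -/
open Finset

/-- For a probability density `P` on subsets of `N = {1,...,n}` satisfying
NID, with level probabilities `δ_t = ∑_{|T|=t} P_T` (so `P_T = |T|!(n−|T|)! δ_{|T|}/n!`),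
the sum of the loss functions satisfies
`∑_{i∈N} λ_i[v] = −n δ_0 v(∅) + ∑_{T≠∅} (|T|!(n−|T|)!/n!)[(n−|T|+1)δ_{|T|−1} − (n−|T|)δ_{|T|}] v(T)`
for every payoff function `v`. -/
theorem stmt7 (n : ℕ) (hn : 1 ≤ n) (P : Finset (Fin n) → ℝ)
    (hP0 : ∀ T : Finset (Fin n), 0 ≤ P T)
    (hP1 : ∑ T : Finset (Fin n), P T = 1)
    (hNID : ∀ T Z : Finset (Fin n), T.card = Z.card → P T = P Z)
    (δ : ℕ → ℝ)
    (hδ : ∀ t : ℕ,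
      δ t = ∑ T ∈ (univ : Finset (Finset (Fin n))).filter (fun T => T.card = t), P T)
    (hPδ : ∀ T : Finset (Fin n),
      P T = ((Nat.factorial T.card * Nat.factorial (n - T.card) : ℕ) : ℝ) * δ T.card
              / ((Nat.factorial n : ℕ) : ℝ))
    (v : Finset (Fin n) → ℝ) :
    ∑ i : Fin n, ∑ T : Finset (Fin n), P T * (v (insert i T) - v T)
      = -(n : ℝ) * δ 0 * v ∅ +
          ∑ T ∈ (univ : Finset (Finset (Fin n))).filter (fun T => T ≠ ∅),
            ((Nat.factorial T.card * Nat.factorial (n - T.card) : ℕ) : ℝ)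
                / ((Nat.factorial n : ℕ) : ℝ) *
              (((n : ℝ) - T.card + 1) * δ (T.card - 1) - ((n : ℝ) - T.card) * δ T.card) *
              v T := by
  have hfn0 : ((Nat.factorial n : ℕ) : ℝ) ≠ 0 := by
    exact_mod_cast Nat.factorial_ne_zero n
  set f : ℕ → ℝ := fun t =>
    ((Nat.factorial t * Nat.factorial (n - t) : ℕ) : ℝ) * δ t / ((Nat.factorial n : ℕ) : ℝ)
    with hf
  have hcard : ∀ S : Finset (Fin n), S.card ≤ n := fun S => by
    simpa using Finset.card_le_univ S
  -- Step 1: collect coefficients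
  have key : ∑ i : Fin n, ∑ T : Finset (Fin n), P T * (v (insert i T) - v T)
      = ∑ S : Finset (Fin n),
          ((S.card : ℝ) * f (S.card - 1) - ((n : ℝ) - S.card) * f S.card) * v S := by
    rw [Finset.sum_comm]
    have inner : ∀ T : Finset (Fin n),
        ∑ i : Fin n, P T * (v (insert i T) - v T)
          = ∑ i ∈ Tᶜ, f T.card * v (insert i T) - ((n : ℝ) - T.card) * f T.card * v T := by
      intro T
      rw [← Finset.sum_add_sum_compl T]
      have h1 : ∑ i ∈ T, P T * (v (insert i T) - v T) = 0 := by
        refine Finset.sum_eq_zero fun i hi => by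
          rw [Finset.insert_eq_self.mpr hi]; ring
      rw [h1, zero_add]
      have h2 : ∀ i, P T * (v (insert i T) - v T)
          = f T.card * v (insert i T) - f T.card * v T := fun i => by
        rw [hPδ T]; ring
      simp only [h2]
      rw [Finset.sum_sub_distrib, Finset.sum_const, nsmul_eq_mul, Finset.card_compl,
        Fintype.card_fin, Nat.cast_sub (hcard T)]
      ring
    simp only [inner]
    rw [Finset.sum_sub_distrib]
    -- positive part via reindexing
    have pos : ∑ T : Finset (Fin n), ∑ i ∈ Tᶜ, f T.card * v (insert i T)
        = ∑ S : Finset (Fin n), (S.card : ℝ) * f (S.card - 1) * v S := by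
      rw [Finset.sum_sigma' univ (fun T => Tᶜ) (fun T i => f T.card * v (insert i T))]
      have : ∑ S : Finset (Fin n), (S.card : ℝ) * f (S.card - 1) * v S
          = ∑ x ∈ (univ : Finset (Finset (Fin n))).sigma (fun S => S),
              f (x.1.card - 1) * v x.1 := by
        rw [← Finset.sum_sigma' univ (fun S => S) (fun S _ => f (S.card - 1) * v S)]
        refine Finset.sum_congr rfl fun S _ => ?_
        rw [Finset.sum_const, nsmul_eq_mul]; ring
      rw [this]
      refine Finset.sum_nbij' (fun x => ⟨insert x.2 x.1, x.2⟩) (fun x => ⟨x.1.erase x.2, x.2⟩)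
        ?_ ?_ ?_ ?_ ?_
      · rintro ⟨T, i⟩ h
        simp only [Finset.mem_sigma, Finset.mem_univ, true_and, Finset.mem_compl] at h ⊢
        exact Finset.mem_insert_self i T
      · rintro ⟨S, i⟩ h
        simp only [Finset.mem_sigma, Finset.mem_univ, true_and, Finset.mem_compl] at h ⊢
        exact Finset.notMem_erase i S
      · rintro ⟨T, i⟩ h
        simp only [Finset.mem_sigma, Finset.mem_univ, true_and, Finset.mem_compl] at h
        simp [Finset.erase_insert h]
      · rintro ⟨S, i⟩ h
        simp only [Finset.mem_sigma, Finset.mem_univ, true_and] at h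
        simp [Finset.insert_erase h]
      · rintro ⟨T, i⟩ h
        simp only [Finset.mem_sigma, Finset.mem_univ, true_and, Finset.mem_compl] at h
        have : (insert i T).card = T.card + 1 := Finset.card_insert_of_notMem h
        simp [this]
    rw [pos, ← Finset.sum_sub_distrib]
    refine Finset.sum_congr rfl fun S _ => ?_
    ring
  rw [key]
  -- Step 2: split off ∅
  have hmem : (∅ : Finset (Fin n)) ∈ (univ : Finset (Finset (Fin n))) := Finset.mem_univ _
  rw [← Finset.add_sum_erase _ _ hmem, ← Finset.filter_ne' (univ : Finset (Finset (Fin n))) ∅]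
  congr 1
  · -- empty set coefficient
    have hf0 : f 0 = δ 0 := by
      simp [hf, Nat.factorial]
      field_simp
    simp [hf0]
  · refine Finset.sum_congr rfl fun S hS => ?_
    have hS' : S ≠ ∅ := (Finset.mem_filter.mp hS).2
    have hpos : 1 ≤ S.card := Finset.card_pos.mpr (Finset.nonempty_of_ne_empty hS')
    obtain ⟨s, hs⟩ := Nat.exists_eq_add_of_le hpos
    have hs' : S.card = s + 1 := by omega
    have hsn : s + 1 ≤ n := hs' ▸ hcard S
    have hsn' : s ≤ n := Nat.le_of_succ_le hsn
    have h1 : n - s = (n - (s+1)) + 1 := by omega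
    rw [hs']
    simp only [hf, Nat.add_sub_cancel]
    have hfac1 : Nat.factorial (s + 1) = (s + 1) * Nat.factorial s := rfl
    have hfac2 : Nat.factorial (n - s) = (n - s) * Nat.factorial (n - (s+1)) := by
      rw [h1, Nat.factorial_succ, ← h1]
    rw [hfac1, hfac2]
    have hc1 : ((n - s : ℕ) : ℝ) = (n : ℝ) - s := Nat.cast_sub hsn'
    have hc2 : ((n - (s+1) : ℕ) : ℝ) = (n : ℝ) - ((s : ℝ) + 1) := by
      rw [Nat.cast_sub hsn]; push_cast; ring
    push_cast [hc1, hc2]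
    field_simp
    ring
end
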